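/- arXiv:2411.16074 — 7 statements merged into one kernel-verified Lean document; each statement's English description precedes it below -/
import Mathlib

section
/- Consider the discrete-time LTI system ξ(k+1) = ξ(k) + α·u(k), y(k) = ξ(k) + D·u(k) with α > 0. If 0 < D < α/2, then the system is not passive: for every β ≤ 0 there exist an input sequence u, initial condition ξ(0) = 0, and T ∈ ℤ_{>0} such that ∑_{k=0}^{T-1} ⟨u(k), y(k)⟩ < β. -/
open scoped RealInnerProductSpace

/-!
The state driven by an input `u` from `ξ 0 = 0` is `ξ k = α • ∑_{j<k} u j`, and expanding
`‖∑_{k<T} u k‖²` shows that the supply `∑_{k<T} ⟪u k, y k⟫` equals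
`α/2 ‖∑_{k<T} u k‖² + (D - α/2) ∑_{k<T} ‖u k‖²`. The input `v, -v` brings the state back to `0`
after two steps, so its supply is `(2D - α) ‖v‖²`, which is arbitrarily negative when `D < α/2`.
-/

open Finset

section

variable {E : Type*} [NormedAddCommGroup E] [InnerProductSpace ℝ E]

theorem norm_sum_range_sq (u : ℕ → E) (T : ℕ) :
    ‖∑ k ∈ range T, u k‖ ^ 2 =
      2 * ∑ k ∈ range T, ⟪u k, ∑ j ∈ range k, u j⟫ + ∑ k ∈ range T, ‖u k‖ ^ 2 := by
  induction T with
  | zero => simp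
  | succ T ih =>
    rw [sum_range_succ, norm_add_sq_real, ih, sum_range_succ, sum_range_succ, real_inner_comm]
    ring

theorem sum_inner_supply_eq (α D : ℝ) (u : ℕ → E) (T : ℕ) :
    ∑ k ∈ range T, ⟪u k, α • ∑ j ∈ range k, u j + D • u k⟫ =
      α / 2 * ‖∑ k ∈ range T, u k‖ ^ 2 + (D - α / 2) * ∑ k ∈ range T, ‖u k‖ ^ 2 := by
  simp only [inner_add_right, real_inner_smul_right, real_inner_self_eq_norm_sq, sum_add_distrib,
    ← mul_sum, norm_sum_range_sq]
  ring

theorem sum_inner_supply_alternating_eq (α D : ℝ) (v : E) :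
    ∑ k ∈ range 2, ⟪(-1 : ℝ) ^ k • v, α • ∑ j ∈ range k, (-1 : ℝ) ^ j • v + D • (-1 : ℝ) ^ k • v⟫ =
      (2 * D - α) * ‖v‖ ^ 2 := by
  rw [sum_inner_supply_eq]
  simp [sum_range_succ]
  ring

end

theorem stmt_3_general {n : ℕ} (hn : 0 < n) (α D : ℝ)
    (hD : D < α / 2) :
    ∀ β : ℝ, β ≤ 0 →
      ∃ (u ξ y : ℕ → EuclideanSpace ℝ (Fin n)) (T : ℕ),
        ξ 0 = 0 ∧
        (∀ k, ξ (k + 1) = ξ k + α • u k) ∧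
        (∀ k, y k = ξ k + D • u k) ∧
        0 < T ∧
        ∑ k ∈ Finset.range T, ⟪u k, y k⟫ < β := by
  intro β _
  have : Nonempty (Fin n) := ⟨⟨0, hn⟩⟩
  have hc : 0 < α - 2 * D := by linarith
  obtain ⟨v, hv⟩ := exists_norm_eq (EuclideanSpace ℝ (Fin n)) (c := |β| / (α - 2 * D) + 1)
    (by positivity)
  set u : ℕ → EuclideanSpace ℝ (Fin n) := fun k => (-1 : ℝ) ^ k • v
  refine ⟨u, fun k => α • ∑ j ∈ range k, u j, fun k => α • ∑ j ∈ range k, u j + D • u k, 2,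
    by simp, fun k => by simp only [sum_range_succ, smul_add], fun k => rfl, two_pos, ?_⟩
  have hr : (α - 2 * D) * (|β| / (α - 2 * D) + 1) = |β| + (α - 2 * D) := by field_simp
  rw [sum_inner_supply_alternating_eq, hv]
  nlinarith [neg_abs_le β, div_nonneg (abs_nonneg β) hc.le]

/-- If `0 < D < α/2` then the modified GD controller is not passive: every candidate
lower bound `β ≤ 0` is violated by some input over some finite horizon. -/
theorem stmt_3 {n : ℕ} (hn : 0 < n) (α D : ℝ) (hα : 0 < α) (hD0 : 0 < D)
    (hD : D < α / 2) :
    ∀ β : ℝ, β ≤ 0 →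
      ∃ (u ξ y : ℕ → EuclideanSpace ℝ (Fin n)) (T : ℕ),
        ξ 0 = 0 ∧
        (∀ k, ξ (k + 1) = ξ k + α • u k) ∧
        (∀ k, y k = ξ k + D • u k) ∧
        0 < T ∧
        ∑ k ∈ Finset.range T, ⟪u k, y k⟫ < β :=
  stmt_3_general hn α D hD
end

section
/- Conversely, if there exists a symmetric positive definite matrix P such that the block matrix [[P - P, P·(αI) - I], [(αP - I)ᵀ, α²P - 2D·I]] is negative semidefinite (with A = I, B = αI, C = I, feedthrough D·I, α > 0), then necessarily P = (1/α)·I and D ≥ α/2. -/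
open Matrix

lemma stmt_5_aux (c e : ℝ) (h : ∀ t : ℝ, 0 ≤ -(t * c + t * c + e)) : c = 0 := by
  by_contra hc
  have h := h ((2 - e) / (2 * c))
  have h2c : (2 : ℝ) * c ≠ 0 := mul_ne_zero two_ne_zero hc
  have : (2 - e) / (2 * c) * c + (2 - e) / (2 * c) * c + e = 2 := by
    field_simp; ring
  linarith

/-- Converse KYP direction for the modified GD controller: any symmetric positive
definite `P` satisfying the positive-real LMI forces `P = (1/α) I` and `D ≥ α/2`. -/
theorem stmt_5 {n : ℕ} (hn : 0 < n) (α D : ℝ) (hα : 0 < α)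
    (P : Matrix (Fin n) (Fin n) ℝ)
    (hPsymm : P.IsSymm) (hPpos : P.PosDef)
    (hLMI : (-(Matrix.fromBlocks (P - P) (α • P - 1)
        (α • P - 1)ᵀ ((α ^ 2) • P - (2 * D) • 1))).PosSemidef) :
    P = (1 / α) • 1 ∧ D ≥ α / 2 := by
  obtain ⟨hHerm, hQF⟩ := Matrix.posSemidef_iff_dotProduct_mulVec.mp hLMI
  set Q : Matrix (Fin n) (Fin n) ℝ := α • P - 1 with hQdef
  set E : Matrix (Fin n) (Fin n) ℝ := (α ^ 2) • P - (2 * D) • 1 with hEdef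
  have hQsym : Qᵀ = Q := by
    simp [hQdef, Matrix.transpose_sub, Matrix.transpose_smul, hPsymm.eq]
  have key : ∀ x y : Fin n → ℝ,
      0 ≤ -(x ⬝ᵥ Q *ᵥ y + y ⬝ᵥ Q *ᵥ x + y ⬝ᵥ E *ᵥ y) := by
    intro x y
    have h := hQF (Sum.elim x y)
    simp only [star_trivial, Matrix.neg_mulVec, Matrix.fromBlocks_mulVec,
      dotProduct_neg, sub_self, Matrix.zero_mulVec, zero_add, hQsym,
      sumElim_dotProduct_sumElim, dotProduct_add,
      Sum.elim_comp_inl, Sum.elim_comp_inr] at h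
    linarith [h]
  have hsymQF : ∀ x y : Fin n → ℝ, y ⬝ᵥ Q *ᵥ x = x ⬝ᵥ Q *ᵥ y := by
    intro x y
    calc y ⬝ᵥ Q *ᵥ x = y ᵥ* Q ⬝ᵥ x := Matrix.dotProduct_mulVec y Q x
      _ = (Q *ᵥ y) ⬝ᵥ x := by rw [← hQsym, Matrix.vecMul_transpose, hQsym]
      _ = x ⬝ᵥ Q *ᵥ y := dotProduct_comm _ _
  have hQ0 : ∀ x y : Fin n → ℝ, x ⬝ᵥ Q *ᵥ y = 0 := by
    intro x y
    refine stmt_5_aux _ (y ⬝ᵥ E *ᵥ y) ?_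
    intro t
    have h := key (t • x) y
    rw [hsymQF (t • x) y] at h
    simp only [smul_dotProduct, smul_eq_mul] at h
    linarith
  have hQzero : Q = 0 := by
    ext i j
    have := hQ0 (Pi.single i 1) (Pi.single j 1)
    simpa using this
  have hP : P = (1 / α) • 1 := by
    have hαP : α • P = 1 := by
      have := hQzero
      rw [hQdef, sub_eq_zero] at this
      exact this
    calc P = (1 / α) • (α • P) := by
            rw [smul_smul, one_div, inv_mul_cancel₀ (ne_of_gt hα), one_smul]
      _ = (1 / α) • 1 := by rw [hαP]
  refine ⟨hP, ?_⟩
  set i0 : Fin n := ⟨0, hn⟩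
  have h := key 0 (Pi.single i0 1)
  have hE1 : E = (α - 2 * D) • (1 : Matrix (Fin n) (Fin n) ℝ) := by
    rw [hEdef, hP, smul_smul, sub_smul]
    congr 1
    rw [pow_two]
    field_simp
  rw [hE1] at h
  simp only [Matrix.mulVec_zero, dotProduct_zero, zero_add,
    Matrix.smul_mulVec, Matrix.one_mulVec, dotProduct_smul,
    dotProduct_zero, smul_eq_mul] at h
  have hdot : (Pi.single i0 1 : Fin n → ℝ) ⬝ᵥ Pi.single i0 1 = 1 := by simp
  rw [hdot] at h
  simp at h
  linarith
end

section
/- Let Δ : sequences → sequences satisfy the VSP inequality ⟨u, y⟩_T ≥ δ‖u‖²_{2T} + ε‖y‖²_{2T} for all T, where y = Δ(u), δ = mL/(m+L), ε = 1/(m+L), 0 < m ≤ L. Let 0 < D < 1/L and define the positive-feedback interconnection Δ̄ mapping ū to y via u = ū + D·y, y = Δ(u). Then Δ̄ is VSP with constants δ̄ = δ/(1 - 2δD) > 0 and ε̄ = (ε - D + δD²)/(1 - 2δD) > 0: for all T, ⟨ū, y⟩_T ≥ δ̄‖ū‖²_{2T} + ε̄‖y‖²_{2T}. -/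
/-!
Substituting `u = ū + D y` into the VSP inequality of `Δ` expands `⟨u, y⟩` and `‖u‖²` into
`⟨ū, y⟩`, `‖ū‖²` and `‖y‖²`; collecting the `⟨ū, y⟩` terms leaves the factor `1 - 2δD` in front
of them, and dividing by it gives the claimed inequality. With `δ = mL/(m+L)` and
`ε = 1/(m+L)` one has `(m+L)(1 - 2δD) = m(1 - LD) + L(1 - mD)` and
`(m+L)(ε - D + δD²) = (1 - mD)(1 - LD)`, both positive once `D < 1/L ≤ 1/m`.
-/

open scoped RealInnerProductSpace
open Finset

section FeedbackSums

variable {ι E : Type*} [NormedAddCommGroup E] [InnerProductSpace ℝ E]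

lemma sum_inner_add_smul_left_self (s : Finset ι) (a y : ι → E) (D : ℝ) :
    ∑ k ∈ s, ⟪a k + D • y k, y k⟫ = ∑ k ∈ s, ⟪a k, y k⟫ + D * ∑ k ∈ s, ‖y k‖ ^ 2 := by
  simp only [inner_add_left, real_inner_smul_left, real_inner_self_eq_norm_sq,
    sum_add_distrib, mul_sum]

lemma sum_norm_add_smul_sq (s : Finset ι) (a y : ι → E) (D : ℝ) :
    ∑ k ∈ s, ‖a k + D • y k‖ ^ 2 =
      ∑ k ∈ s, ‖a k‖ ^ 2 + 2 * D * ∑ k ∈ s, ⟪a k, y k⟫ + D ^ 2 * ∑ k ∈ s, ‖y k‖ ^ 2 := by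
  simp only [norm_add_sq_real, real_inner_smul_right, norm_smul, mul_pow, Real.norm_eq_abs,
    sq_abs, sum_add_distrib, mul_sum, mul_assoc]

end FeedbackSums

lemma feedback_passivity_bound {δ ε D P U Y : ℝ} (hden : 0 < 1 - 2 * δ * D)
    (h : P + D * Y ≥ δ * (U + 2 * D * P + D ^ 2 * Y) + ε * Y) :
    P ≥ δ / (1 - 2 * δ * D) * U + (ε - D + δ * D ^ 2) / (1 - 2 * δ * D) * Y := by
  rw [div_mul_eq_mul_div, div_mul_eq_mul_div, ← add_div, ge_iff_le,
    div_le_iff₀ hden]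
  linear_combination h

lemma one_sub_two_mul_harmonic_mul_eq (m L D : ℝ) (h : m + L ≠ 0) :
    1 - 2 * (m * L / (m + L)) * D = (m * (1 - L * D) + L * (1 - m * D)) / (m + L) := by
  field_simp
  ring

lemma inv_sub_add_harmonic_mul_sq_eq (m L D : ℝ) (h : m + L ≠ 0) :
    1 / (m + L) - D + m * L / (m + L) * D ^ 2 = (1 - m * D) * (1 - L * D) / (m + L) := by
  field_simp
  ring

theorem stmt_7_general {n : ℕ} (m L D : ℝ) (hm : 0 < m) (hmL : m ≤ L)
    (hD : D < 1 / L)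
    (Δ : (ℕ → EuclideanSpace ℝ (Fin n)) → (ℕ → EuclideanSpace ℝ (Fin n)))
    (hVSP : ∀ (u : ℕ → EuclideanSpace ℝ (Fin n)) (T : ℕ), 0 < T →
      ∑ k ∈ Finset.range T, ⟪u k, Δ u k⟫ ≥
        m * L / (m + L) * ∑ k ∈ Finset.range T, ‖u k‖ ^ 2 +
        1 / (m + L) * ∑ k ∈ Finset.range T, ‖Δ u k‖ ^ 2) :
    (m * L / (m + L)) / (1 - 2 * (m * L / (m + L)) * D) > 0 ∧
    (1 / (m + L) - D + (m * L / (m + L)) * D ^ 2) /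
        (1 - 2 * (m * L / (m + L)) * D) > 0 ∧
    ∀ (ubar u y : ℕ → EuclideanSpace ℝ (Fin n)),
      y = Δ u →
      (∀ k, u k = ubar k + D • y k) →
      ∀ T : ℕ, 0 < T →
        ∑ k ∈ Finset.range T, ⟪ubar k, y k⟫ ≥
          (m * L / (m + L)) / (1 - 2 * (m * L / (m + L)) * D) *
            ∑ k ∈ Finset.range T, ‖ubar k‖ ^ 2 +
          (1 / (m + L) - D + (m * L / (m + L)) * D ^ 2) /
              (1 - 2 * (m * L / (m + L)) * D) *
            ∑ k ∈ Finset.range T, ‖y k‖ ^ 2 := by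
  have hL : 0 < L := hm.trans_le hmL
  have hmL0 : m + L ≠ 0 := by positivity
  have hLD : 0 < 1 - L * D := by
    have := (lt_div_iff₀ hL).mp hD
    linarith
  have hmD : 0 < 1 - m * D := by
    have := (lt_div_iff₀ hm).mp (hD.trans_le (one_div_le_one_div_of_le hm hmL))
    linarith
  have hden : 0 < 1 - 2 * (m * L / (m + L)) * D := by
    rw [one_sub_two_mul_harmonic_mul_eq m L D hmL0]
    positivity
  have hnum : 0 < 1 / (m + L) - D + m * L / (m + L) * D ^ 2 := by
    rw [inv_sub_add_harmonic_mul_sq_eq m L D hmL0]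
    positivity
  refine ⟨div_pos (by positivity) hden, div_pos hnum hden, ?_⟩
  intro ubar u y hy hu T hT
  have h := hVSP u T hT
  rw [← hy] at h
  simp only [hu, sum_inner_add_smul_left_self, sum_norm_add_smul_sq] at h
  exact feedback_passivity_bound hden h

/-- Positive feedback of a VSP system `Δ` (with sector constants `δ = mL/(m+L)`,
`ε = 1/(m+L)`) with gain `D·I`, `0 < D < 1/L`, yields a VSP system `Δ̄` with
`δ̄ = δ/(1-2δD)` and `ε̄ = (ε - D + δD²)/(1-2δD)`. -/
theorem stmt_7 {n : ℕ} (m L D : ℝ) (hm : 0 < m) (hmL : m ≤ L)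
    (hD0 : 0 < D) (hD : D < 1 / L)
    (Δ : (ℕ → EuclideanSpace ℝ (Fin n)) → (ℕ → EuclideanSpace ℝ (Fin n)))
    (hVSP : ∀ (u : ℕ → EuclideanSpace ℝ (Fin n)) (T : ℕ), 0 < T →
      ∑ k ∈ Finset.range T, ⟪u k, Δ u k⟫ ≥
        m * L / (m + L) * ∑ k ∈ Finset.range T, ‖u k‖ ^ 2 +
        1 / (m + L) * ∑ k ∈ Finset.range T, ‖Δ u k‖ ^ 2) :
    (m * L / (m + L)) / (1 - 2 * (m * L / (m + L)) * D) > 0 ∧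
    (1 / (m + L) - D + (m * L / (m + L)) * D ^ 2) /
        (1 - 2 * (m * L / (m + L)) * D) > 0 ∧
    ∀ (ubar u y : ℕ → EuclideanSpace ℝ (Fin n)),
      y = Δ u →
      (∀ k, u k = ubar k + D • y k) →
      ∀ T : ℕ, 0 < T →
        ∑ k ∈ Finset.range T, ⟪ubar k, y k⟫ ≥
          (m * L / (m + L)) / (1 - 2 * (m * L / (m + L)) * D) *
            ∑ k ∈ Finset.range T, ‖ubar k‖ ^ 2 +
          (1 / (m + L) - D + (m * L / (m + L)) * D ^ 2) /
              (1 - 2 * (m * L / (m + L)) * D) *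
            ∑ k ∈ Finset.range T, ‖y k‖ ^ 2 :=
  stmt_7_general m L D hm hmL hD Δ hVSP
end

section
/- Let Δ satisfy the VSP inequality with δ = mL/(m+L), ε = 1/(m+L), and 0 < m < L. Set D = 1/L and define Δ̄ by the positive feedback interconnection u = ū + D·y, y = Δ(u). Then Δ̄ is input strictly passive: there exists δ̄ > 0 (namely δ̄ = δ/(1 - 2δ/L) = mL/(L - m)) such that ⟨ū, y⟩_T ≥ δ̄‖ū‖²_{2T} for all inputs ū and all T ∈ ℤ_{>0}. -/
open scoped RealInnerProductSpace

/-- At the boundary gain `D = 1/L` (with `m < L`), the positive feedback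
interconnection of the VSP nonlinearity `Δ` with `D·I` is input strictly passive,
with `δ̄ = mL/(L-m)`. -/
theorem stmt_9 {n : ℕ} (m L : ℝ) (hm : 0 < m) (hmL : m < L)
    (Δ : (ℕ → EuclideanSpace ℝ (Fin n)) → (ℕ → EuclideanSpace ℝ (Fin n)))
    (hVSP : ∀ (u : ℕ → EuclideanSpace ℝ (Fin n)) (T : ℕ), 0 < T →
      ∑ k ∈ Finset.range T, ⟪u k, Δ u k⟫ ≥
        m * L / (m + L) * ∑ k ∈ Finset.range T, ‖u k‖ ^ 2 +
        1 / (m + L) * ∑ k ∈ Finset.range T, ‖Δ u k‖ ^ 2) :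
    ∃ δbar : ℝ, δbar = m * L / (L - m) ∧ 0 < δbar ∧
      ∀ (ubar u y : ℕ → EuclideanSpace ℝ (Fin n)),
        y = Δ u →
        (∀ k, u k = ubar k + (1 / L) • y k) →
        ∀ T : ℕ, 0 < T →
          ∑ k ∈ Finset.range T, ⟪ubar k, y k⟫ ≥
            δbar * ∑ k ∈ Finset.range T, ‖ubar k‖ ^ 2 := by
  have hL : (0:ℝ) < L := hm.trans hmL
  have hML : (0:ℝ) < m + L := by linarith
  have hLm : (0:ℝ) < L - m := by linarith
  refine ⟨m * L / (L - m), rfl, div_pos (mul_pos hm hL) hLm, ?_⟩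
  intro ubar u y hy hu T hT
  have h := hVSP u T hT
  rw [← hy] at h
  set S1 := ∑ k ∈ Finset.range T, ⟪ubar k, y k⟫ with hS1
  set S2 := ∑ k ∈ Finset.range T, ‖ubar k‖ ^ 2 with hS2
  set S3 := ∑ k ∈ Finset.range T, ‖y k‖ ^ 2 with hS3
  have e1 : ∑ k ∈ Finset.range T, ⟪u k, y k⟫ = S1 + (1 / L) * S3 := by
    rw [hS1, hS3, Finset.mul_sum, ← Finset.sum_add_distrib]
    refine Finset.sum_congr rfl fun k _ => ?_
    rw [hu k, inner_add_left, real_inner_smul_left, real_inner_self_eq_norm_sq]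
  have e2 : ∑ k ∈ Finset.range T, ‖u k‖ ^ 2 =
      S2 + (2 / L) * S1 + (1 / L) ^ 2 * S3 := by
    rw [hS1, hS2, hS3, Finset.mul_sum, Finset.mul_sum, ← Finset.sum_add_distrib,
      ← Finset.sum_add_distrib]
    refine Finset.sum_congr rfl fun k _ => ?_
    rw [hu k, ← real_inner_self_eq_norm_sq, inner_add_add_self]
    simp only [real_inner_smul_left, real_inner_smul_right, real_inner_self_eq_norm_sq]
    rw [real_inner_comm (y k) (ubar k), norm_smul]
    simp only [Real.norm_eq_abs, mul_pow, sq_abs]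
    ring
  rw [e1, e2] at h
  rw [ge_iff_le, div_mul_eq_mul_div, div_le_iff₀ hLm]
  rw [ge_iff_le] at h
  have hL0 : (L:ℝ) ≠ 0 := ne_of_gt hL
  have hML0 : (m + L) ≠ 0 := ne_of_gt hML
  field_simp at h
  have hc : (0:ℝ) < (m + L) * L ^ 3 := by positivity
  rw [← mul_le_mul_iff_right₀ hc]
  nlinarith [h, mul_le_mul_of_nonneg_left h (le_of_lt (by positivity : (0:ℝ) < (m + L) * L ^ 2))]
end

section
/- Let f : ℝⁿ → ℝ be in the sector class S_{m,L} with 0 < m ≤ L and unique global minimizer x*. For step size 0 < α < 2/L, the gradient descent iterates x(k+1) = x(k) - α∇f(x(k)) satisfy ∑_{k=0}^{∞} ‖∇f(x(k))‖² < ∞; in particular ∇f(x(k)) → 0 as k → ∞. -/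
open scoped RealInnerProductSpace
open Filter

/-- For `f` in the sector class `S_{m,L}` and step size `0 < α < 2/L`, the gradient
descent iterates have square-summable gradients, and in particular the gradients
converge to zero. -/
theorem stmt_10 {n : ℕ} (f : EuclideanSpace ℝ (Fin n) → ℝ) (m L : ℝ)
    (hm : 0 < m) (hmL : m ≤ L)
    (hf : ContDiff ℝ 1 f)
    (xs : EuclideanSpace ℝ (Fin n))
    (hmin : ∀ x, f xs ≤ f x)
    (huniq : ∀ y, (∀ x, f y ≤ f x) → y = xs)
    (hgrad0 : gradient f xs = 0)
    (hsector : ∀ x, ⟪x - xs, gradient f x⟫ ≥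
      m * L / (m + L) * ‖x - xs‖ ^ 2 + 1 / (m + L) * ‖gradient f x‖ ^ 2)
    (α : ℝ) (hα0 : 0 < α) (hα : α < 2 / L)
    (x : ℕ → EuclideanSpace ℝ (Fin n))
    (hupd : ∀ k, x (k + 1) = x k - α • gradient f (x k)) :
    Summable (fun k => ‖gradient f (x k)‖ ^ 2) ∧
    Tendsto (fun k => gradient f (x k)) atTop (nhds 0) := by
  have hL : 0 < L := lt_of_lt_of_le hm hmL
  have hmLpos : 0 < m + L := by linarith
  set c : ℝ := α * (2 / L - α) with hc
  have hcpos : 0 < c := mul_pos hα0 (by linarith)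
  -- key: inner product lower bound ⟪e, g⟫ ≥ ‖g‖²/L
  have hkey : ∀ k, ‖gradient f (x k)‖ ^ 2 / L ≤ ⟪x k - xs, gradient f (x k)⟫ := by
    intro k
    set a := ‖x k - xs‖ with ha
    set b := ‖gradient f (x k)‖ with hb
    have ha0 : 0 ≤ a := norm_nonneg _
    have hb0 : 0 ≤ b := norm_nonneg _
    have hsec := hsector (x k)
    have hcs : ⟪x k - xs, gradient f (x k)⟫ ≤ a * b := real_inner_le_norm _ _
    -- from sector + Cauchy-Schwarz: m*L*a² + b² ≤ (m+L)*a*b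
    have h1 : m * L * a ^ 2 + b ^ 2 ≤ (m + L) * (a * b) := by
      have := le_trans hsec.le hcs
      have h2 : m * L / (m + L) * a ^ 2 + 1 / (m + L) * b ^ 2 ≤ a * b := this
      have := mul_le_mul_of_nonneg_left h2 hmLpos.le
      field_simp at this
      nlinarith [this]
    -- deduce b ≤ L * a
    have hbLa : b ≤ L * a := by
      by_contra h
      push_neg at h
      have hma : m * a ≤ L * a := mul_le_mul_of_nonneg_right hmL ha0
      nlinarith [mul_pos (sub_pos.mpr (lt_of_le_of_lt hma h)) (sub_pos.mpr h)]
    have hb2 : b ^ 2 ≤ L ^ 2 * a ^ 2 := by nlinarith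
    have : b ^ 2 / L ≤ m * L / (m + L) * a ^ 2 + 1 / (m + L) * b ^ 2 := by
      rw [div_le_iff₀ hL]
      field_simp
      nlinarith
    linarith [hsec]
  -- descent inequality
  have hstep : ∀ k, ‖x (k + 1) - xs‖ ^ 2 + c * ‖gradient f (x k)‖ ^ 2 ≤ ‖x k - xs‖ ^ 2 := by
    intro k
    have hexp : x (k + 1) - xs = (x k - xs) - α • gradient f (x k) := by
      rw [hupd k]; abel
    rw [hexp]
    have hns : ‖(x k - xs) - α • gradient f (x k)‖ ^ 2
        = ‖x k - xs‖ ^ 2 - 2 * ⟪x k - xs, α • gradient f (x k)⟫ + ‖α • gradient f (x k)‖ ^ 2 := by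
      rw [@norm_sub_sq_real]
    rw [hns]
    have h1 : ⟪x k - xs, α • gradient f (x k)⟫ = α * ⟪x k - xs, gradient f (x k)⟫ :=
      real_inner_smul_right _ _ _
    have h2 : ‖α • gradient f (x k)‖ ^ 2 = α ^ 2 * ‖gradient f (x k)‖ ^ 2 := by
      rw [norm_smul]; simp [abs_of_pos hα0]; ring
    rw [h1, h2]
    have hk := hkey k
    have hdiv : ‖gradient f (x k)‖ ^ 2 / L = (1 / L) * ‖gradient f (x k)‖ ^ 2 := by ring
    have : α * (‖gradient f (x k)‖ ^ 2 / L) ≤ α * ⟪x k - xs, gradient f (x k)⟫ :=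
      mul_le_mul_of_nonneg_left hk hα0.le
    rw [hdiv] at this
    have hfin : c * ‖gradient f (x k)‖ ^ 2 + α ^ 2 * ‖gradient f (x k)‖ ^ 2
        ≤ 2 * (α * ⟪x k - xs, gradient f (x k)⟫) := by
      have h3 : c * ‖gradient f (x k)‖ ^ 2 + α ^ 2 * ‖gradient f (x k)‖ ^ 2
          = 2 * (α * (1 / L * ‖gradient f (x k)‖ ^ 2)) := by
        rw [hc]; field_simp; ring
      rw [h3]; linarith [this]
    linarith [hfin]
  -- partial sums bounded
  have hsum : Summable (fun k => ‖gradient f (x k)‖ ^ 2) := by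
    have hnn : ∀ k, (0:ℝ) ≤ ‖gradient f (x k)‖ ^ 2 := fun k => by positivity
    have hpartial : ∀ N, ∑ k ∈ Finset.range N, ‖gradient f (x k)‖ ^ 2
        ≤ ‖x 0 - xs‖ ^ 2 / c := by
      intro N
      have htel : c * ∑ k ∈ Finset.range N, ‖gradient f (x k)‖ ^ 2
          ≤ ‖x 0 - xs‖ ^ 2 - ‖x N - xs‖ ^ 2 := by
        induction N with
        | zero => simp
        | succ N ih =>
          rw [Finset.sum_range_succ, mul_add]
          have := hstep N
          linarith
      have hnorm : (0:ℝ) ≤ ‖x N - xs‖ ^ 2 := by positivity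
      rw [le_div_iff₀ hcpos]
      linarith [htel]
    exact summable_of_sum_range_le hnn hpartial
  refine ⟨hsum, ?_⟩
  have h0 : Tendsto (fun k => ‖gradient f (x k)‖ ^ 2) atTop (nhds 0) :=
    hsum.tendsto_atTop_zero
  have h2 : Tendsto (fun k => ‖gradient f (x k)‖) atTop (nhds 0) := by
    have heq : (fun k => ‖gradient f (x k)‖)
        = fun k => Real.sqrt (‖gradient f (x k)‖ ^ 2) := by
      funext k; rw [Real.sqrt_sq (norm_nonneg _)]
    rw [heq]
    have := (Real.continuous_sqrt.tendsto 0).comp h0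
    simpa [Function.comp_def] using this
  exact tendsto_zero_iff_norm_tendsto_zero.mpr h2
end

section
/- Let f ∈ S_{m,L} with 0 < m < L and unique global minimizer x*. For α = 2/L, the gradient descent iterates x(k+1) = x(k) - α∇f(x(k)) satisfy ∑_{k=0}^{∞} ‖x(k) - x* - (α/2)∇f(x(k))‖² < ∞; in particular x(k) - (1/L)∇f(x(k)) → x* as k → ∞. -/
/-!
Gradient descent with step `2/L` need not converge, but `V = ‖x - x*‖²` is still a Lyapunov
function: by the sector inequality for `∇f`, the shifted output `x - x* - (1/L)∇f(x)` has squared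
norm at most `(L - m)/(4m)` times the decrease of `V` in one step. Telescoping gives
square-summability, and the terms of a convergent series tend to zero.
-/

open scoped RealInnerProductSpace
open Filter

section InnerProductSpace

variable {E : Type*} [NormedAddCommGroup E] [InnerProductSpace ℝ E]

theorem norm_sub_smul_sq_real (v g : E) (t : ℝ) :
    ‖v - t • g‖ ^ 2 = ‖v‖ ^ 2 - 2 * t * ⟪v, g⟫ + t ^ 2 * ‖g‖ ^ 2 := by
  rw [norm_sub_sq_real, real_inner_smul_right, norm_smul, mul_pow, Real.norm_eq_abs, sq_abs]
  ring

theorem norm_sub_inv_smul_sq_le_of_sector {m L : ℝ} (hm : 0 < m) (hL : 0 < L) {v g : E}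
    (hsector : ⟪v, g⟫ ≥ m * L / (m + L) * ‖v‖ ^ 2 + 1 / (m + L) * ‖g‖ ^ 2) :
    ‖v - (1 / L) • g‖ ^ 2 ≤ (L - m) / (4 * m) * (‖v‖ ^ 2 - ‖v - (2 / L) • g‖ ^ 2) := by
  rw [norm_sub_smul_sq_real, norm_sub_smul_sq_real]
  have hmL : 0 < m + L := by positivity
  have hcleared : m * L * ‖v‖ ^ 2 + ‖g‖ ^ 2 ≤ (m + L) * ⟪v, g⟫ := by
    calc m * L * ‖v‖ ^ 2 + ‖g‖ ^ 2
        = (m + L) * (m * L / (m + L) * ‖v‖ ^ 2 + 1 / (m + L) * ‖g‖ ^ 2) := by field_simp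
      _ ≤ (m + L) * ⟪v, g⟫ := mul_le_mul_of_nonneg_left hsector hmL.le
  have hgap : (L - m) / (4 * m) * (‖v‖ ^ 2 - (‖v‖ ^ 2 - 2 * (2 / L) * ⟪v, g⟫ + (2 / L) ^ 2 * ‖g‖ ^ 2))
      - (‖v‖ ^ 2 - 2 * (1 / L) * ⟪v, g⟫ + (1 / L) ^ 2 * ‖g‖ ^ 2)
      = ((m + L) * ⟪v, g⟫ - (m * L * ‖v‖ ^ 2 + ‖g‖ ^ 2)) / (m * L) := by
    field_simp
    ring
  rw [← sub_nonneg, hgap]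
  exact div_nonneg (by linarith) (by positivity)

end InnerProductSpace

theorem summable_of_le_sub_succ {T W : ℕ → ℝ} (hT : ∀ k, 0 ≤ T k) (hW : ∀ k, 0 ≤ W k)
    (hdecr : ∀ k, T k ≤ W k - W (k + 1)) : Summable T := by
  refine summable_of_sum_range_le hT (c := W 0) fun N => ?_
  calc ∑ k ∈ Finset.range N, T k
      ≤ ∑ k ∈ Finset.range N, (W k - W (k + 1)) := Finset.sum_le_sum fun k _ => hdecr k
    _ = W 0 - W N := Finset.sum_range_sub' W N
    _ ≤ W 0 := sub_le_self _ (hW N)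

theorem tendsto_of_summable_norm_sub_sq {F : Type*} [SeminormedAddCommGroup F] {u : ℕ → F} {a : F}
    (h : Summable fun k => ‖u k - a‖ ^ 2) : Tendsto u atTop (nhds a) := by
  rw [tendsto_iff_norm_sub_tendsto_zero]
  have hsqrt := h.tendsto_atTop_zero.sqrt
  simpa only [Real.sqrt_sq (norm_nonneg _), Real.sqrt_zero] using hsqrt

theorem stmt_12_general {n : ℕ} (f : EuclideanSpace ℝ (Fin n) → ℝ) (m L : ℝ)
    (hm : 0 < m) (hmL : m < L)
    (xs : EuclideanSpace ℝ (Fin n))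
    (hsector : ∀ x, ⟪x - xs, gradient f x⟫ ≥
      m * L / (m + L) * ‖x - xs‖ ^ 2 + 1 / (m + L) * ‖gradient f x‖ ^ 2)
    (α : ℝ) (hα : α = 2 / L)
    (x : ℕ → EuclideanSpace ℝ (Fin n))
    (hupd : ∀ k, x (k + 1) = x k - α • gradient f (x k)) :
    Summable (fun k => ‖x k - xs - (α / 2) • gradient f (x k)‖ ^ 2) ∧
    Tendsto (fun k => x k - (1 / L) • gradient f (x k)) atTop (nhds xs) := by
  have hL : 0 < L := hm.trans hmL
  have hhalf : α / 2 = 1 / L := by rw [hα]; ring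
  have hc : 0 ≤ (L - m) / (4 * m) := div_nonneg (by linarith) (by linarith)
  have hstep : ∀ k, ‖x k - xs - (1 / L) • gradient f (x k)‖ ^ 2 ≤
      (L - m) / (4 * m) * ‖x k - xs‖ ^ 2 - (L - m) / (4 * m) * ‖x (k + 1) - xs‖ ^ 2 := by
    intro k
    rw [← mul_sub, hupd k, sub_right_comm (x k) (α • _) xs, hα]
    exact norm_sub_inv_smul_sq_le_of_sector hm hL (hsector (x k))
  have hsum : Summable fun k => ‖x k - xs - (1 / L) • gradient f (x k)‖ ^ 2 :=
    summable_of_le_sub_succ (fun k => by positivity) (fun k => by positivity) hstep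
  refine ⟨hhalf ▸ hsum, tendsto_of_summable_norm_sub_sq ?_⟩
  simpa only [sub_right_comm _ xs] using hsum

/-- At the boundary step size `α = 2/L` (with `m < L`), the shifted output
`x(k) - x* - (α/2)∇f(x(k))` of gradient descent is square-summable; in particular
`x(k) - (1/L)∇f(x(k)) → x*`. -/
theorem stmt_12 {n : ℕ} (f : EuclideanSpace ℝ (Fin n) → ℝ) (m L : ℝ)
    (hm : 0 < m) (hmL : m < L)
    (hf : ContDiff ℝ 1 f)
    (xs : EuclideanSpace ℝ (Fin n))
    (hmin : ∀ x, f xs ≤ f x)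
    (huniq : ∀ y, (∀ x, f y ≤ f x) → y = xs)
    (hgrad0 : gradient f xs = 0)
    (hsector : ∀ x, ⟪x - xs, gradient f x⟫ ≥
      m * L / (m + L) * ‖x - xs‖ ^ 2 + 1 / (m + L) * ‖gradient f x‖ ^ 2)
    (α : ℝ) (hα : α = 2 / L)
    (x : ℕ → EuclideanSpace ℝ (Fin n))
    (hupd : ∀ k, x (k + 1) = x k - α • gradient f (x k)) :
    Summable (fun k => ‖x k - xs - (α / 2) • gradient f (x k)‖ ^ 2) ∧
    Tendsto (fun k => x k - (1 / L) • gradient f (x k)) atTop (nhds xs) :=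
  stmt_12_general f m L hm hmL xs hsector α hα x hupd
end

section
/- Consider two causal operators G, Δ on ℓ_{2e} in negative feedback: u₁ = r₁ - y₂, u₂ = r₂ + y₁, y₁ = G u₁, y₂ = Δ u₂, assumed well-posed. If G is passive and Δ is very strictly passive (⟨u₂, y₂⟩_T ≥ β' + δ‖u₂‖²_{2T} + ε‖y₂‖²_{2T} with δ, ε > 0), and r₁, r₂ ∈ ℓ₂, then y₁ ∈ ℓ₂ and y₂ ∈ ℓ₂. -/
open scoped RealInnerProductSpace

private lemma young_aux (a c t : ℝ) (ht : 0 < t) : 2*a*c ≤ (1/t)*a^2 + t*c^2 := by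
  have h : (1/t)*a^2 + t*c^2 = (a^2 + t^2*c^2)/t := by field_simp
  rw [h, le_div_iff₀ ht]
  nlinarith [sq_nonneg (a - t*c)]

set_option maxHeartbeats 1600000 in
/-- Strong passivity theorem (discrete time): if `G` is passive, `Δ` is very
strictly passive, and the closed loop `u₁ = r₁ - y₂`, `u₂ = r₂ + y₁`,
`y₁ = G u₁`, `y₂ = Δ u₂` is well-posed with `r₁, r₂ ∈ ℓ₂`, then `y₁, y₂ ∈ ℓ₂`. -/
theorem stmt_18 {n : ℕ}
    (G Δ : (ℕ → EuclideanSpace ℝ (Fin n)) → (ℕ → EuclideanSpace ℝ (Fin n)))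
    (β : ℝ) (hβ : β ≤ 0)
    (hG : ∀ (u : ℕ → EuclideanSpace ℝ (Fin n)) (T : ℕ), 0 < T →
      ∑ k ∈ Finset.range T, ⟪u k, G u k⟫ ≥ β)
    (β' δ ε : ℝ) (hβ' : β' ≤ 0) (hδ : 0 < δ) (hε : 0 < ε)
    (hΔ : ∀ (u : ℕ → EuclideanSpace ℝ (Fin n)) (T : ℕ), 0 < T →
      ∑ k ∈ Finset.range T, ⟪u k, Δ u k⟫ ≥
        β' + δ * ∑ k ∈ Finset.range T, ‖u k‖ ^ 2 +
        ε * ∑ k ∈ Finset.range T, ‖Δ u k‖ ^ 2)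
    (r₁ r₂ u₁ u₂ y₁ y₂ : ℕ → EuclideanSpace ℝ (Fin n))
    (hy₁ : y₁ = G u₁) (hy₂ : y₂ = Δ u₂)
    (hu₁ : ∀ k, u₁ k = r₁ k - y₂ k)
    (hu₂ : ∀ k, u₂ k = r₂ k + y₁ k)
    (hr₁ : Summable (fun k => ‖r₁ k‖ ^ 2))
    (hr₂ : Summable (fun k => ‖r₂ k‖ ^ 2)) :
    Summable (fun k => ‖y₁ k‖ ^ 2) ∧ Summable (fun k => ‖y₂ k‖ ^ 2) := by
  have e₁ : ∀ k, y₁ k = G u₁ k := fun k => by rw [hy₁]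
  have e₂ : ∀ k, y₂ k = Δ u₂ k := fun k => by rw [hy₂]
  have hG' : ∀ T, 0 < T → ∑ k ∈ Finset.range T, ⟪u₁ k, y₁ k⟫ ≥ β := by
    intro T hT; simpa only [e₁] using hG u₁ T hT
  have hΔ' : ∀ T, 0 < T → ∑ k ∈ Finset.range T, ⟪u₂ k, y₂ k⟫ ≥
      β' + δ * ∑ k ∈ Finset.range T, ‖u₂ k‖ ^ 2 +
      ε * ∑ k ∈ Finset.range T, ‖y₂ k‖ ^ 2 := by
    intro T hT; simpa only [e₂] using hΔ u₂ T hT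
  set A := ∑' k, ‖r₁ k‖^2 with hAdef
  set B := ∑' k, ‖r₂ k‖^2 with hBdef
  have hA0 : 0 ≤ A := tsum_nonneg fun k => sq_nonneg _
  have hB0 : 0 ≤ B := tsum_nonneg fun k => sq_nonneg _
  have hAT : ∀ T, ∑ k ∈ Finset.range T, ‖r₁ k‖^2 ≤ A :=
    fun T => Summable.sum_le_tsum _ (fun k _ => sq_nonneg _) hr₁
  have hBT : ∀ T, ∑ k ∈ Finset.range T, ‖r₂ k‖^2 ≤ B :=
    fun T => Summable.sum_le_tsum _ (fun k _ => sq_nonneg _) hr₂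
  set C := -2*β - 2*β' + (1/(δ/2)+1)*A + (1/(ε/2)+1)*B with hCdef
  have hcA : (0:ℝ) ≤ 1/(δ/2)+1 := by positivity
  have hcB : (0:ℝ) ≤ 1/(ε/2)+1 := by positivity
  have hC0 : 0 ≤ C := by
    have h1 := mul_nonneg hcA hA0
    have h2 := mul_nonneg hcB hB0
    rw [hCdef]; linarith
  have key : ∀ T, (3*δ/2) * (∑ k ∈ Finset.range T, ‖u₂ k‖^2) +
      (3*ε/2) * (∑ k ∈ Finset.range T, ‖y₂ k‖^2) ≤ C := by
    intro T
    rcases Nat.eq_zero_or_pos T with rfl | hT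
    · simpa using hC0
    have h1 := hG' T hT
    have h2 := hΔ' T hT
    have h3 : ∑ k ∈ Finset.range T, ⟪u₁ k, y₁ k⟫ + ∑ k ∈ Finset.range T, ⟪u₂ k, y₂ k⟫
        = ∑ k ∈ Finset.range T, ⟪r₁ k, y₁ k⟫ + ∑ k ∈ Finset.range T, ⟪r₂ k, y₂ k⟫ := by
      rw [← Finset.sum_add_distrib, ← Finset.sum_add_distrib]
      refine Finset.sum_congr rfl fun k _ => ?_
      rw [hu₁ k, hu₂ k, inner_sub_left, inner_add_left, real_inner_comm (y₂ k) (y₁ k)]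
      ring
    have h4 : ∀ k, 2*⟪r₁ k, y₁ k⟫ + 2*⟪r₂ k, y₂ k⟫ ≤
        (1/(δ/2)+1)*‖r₁ k‖^2 + (1/(ε/2)+1)*‖r₂ k‖^2 + (δ/2)*‖u₂ k‖^2 + (ε/2)*‖y₂ k‖^2 := by
      intro k
      have hy1 : ‖y₁ k‖ ≤ ‖u₂ k‖ + ‖r₂ k‖ := by
        have h : y₁ k = u₂ k - r₂ k := by rw [hu₂ k]; abel
        rw [h]; exact norm_sub_le _ _
      have i1 : ⟪r₁ k, y₁ k⟫ ≤ ‖r₁ k‖ * ‖y₁ k‖ := real_inner_le_norm _ _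
      have i2 : ⟪r₂ k, y₂ k⟫ ≤ ‖r₂ k‖ * ‖y₂ k‖ := real_inner_le_norm _ _
      have j1 := young_aux (‖r₁ k‖) (‖u₂ k‖) (δ/2) (by positivity)
      have j2 := young_aux (‖r₂ k‖) (‖y₂ k‖) (ε/2) (by positivity)
      nlinarith [i1, i2, j1, j2, sq_nonneg (‖r₁ k‖ - ‖r₂ k‖),
        mul_le_mul_of_nonneg_left hy1 (norm_nonneg (r₁ k))]
    have h5 : ∑ k ∈ Finset.range T, (2*⟪r₁ k, y₁ k⟫ + 2*⟪r₂ k, y₂ k⟫) ≤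
        ∑ k ∈ Finset.range T, ((1/(δ/2)+1)*‖r₁ k‖^2 + (1/(ε/2)+1)*‖r₂ k‖^2 +
          (δ/2)*‖u₂ k‖^2 + (ε/2)*‖y₂ k‖^2) :=
      Finset.sum_le_sum fun k _ => h4 k
    simp only [Finset.sum_add_distrib, ← Finset.mul_sum] at h5
    have hA' := mul_le_mul_of_nonneg_left (hAT T) hcA
    have hB' := mul_le_mul_of_nonneg_left (hBT T) hcB
    rw [hCdef]
    linarith
  have hYnn : ∀ T, (0:ℝ) ≤ ∑ k ∈ Finset.range T, ‖y₂ k‖^2 :=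
    fun T => Finset.sum_nonneg fun k _ => sq_nonneg _
  have hUnn : ∀ T, (0:ℝ) ≤ ∑ k ∈ Finset.range T, ‖u₂ k‖^2 :=
    fun T => Finset.sum_nonneg fun k _ => sq_nonneg _
  have hUb : ∀ T, ∑ k ∈ Finset.range T, ‖u₂ k‖^2 ≤ C / (3*δ/2) := by
    intro T
    rw [le_div_iff₀ (by positivity)]
    have h := mul_nonneg (by positivity : (0:ℝ) ≤ 3*ε/2) (hYnn T)
    linarith [key T]
  have hYb : ∀ T, ∑ k ∈ Finset.range T, ‖y₂ k‖^2 ≤ C / (3*ε/2) := by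
    intro T
    rw [le_div_iff₀ (by positivity)]
    have h := mul_nonneg (by positivity : (0:ℝ) ≤ 3*δ/2) (hUnn T)
    linarith [key T]
  have hU : Summable (fun k => ‖u₂ k‖^2) :=
    summable_of_sum_range_le (fun k => sq_nonneg _) hUb
  have hY2 : Summable (fun k => ‖y₂ k‖^2) :=
    summable_of_sum_range_le (fun k => sq_nonneg _) hYb
  have hY1 : Summable (fun k => ‖y₁ k‖^2) := by
    refine Summable.of_nonneg_of_le (fun k => sq_nonneg _) (fun k => ?_)
      ((hU.mul_left 2).add (hr₂.mul_left 2))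
    have h : ‖y₁ k‖ ≤ ‖u₂ k‖ + ‖r₂ k‖ := by
      have h' : y₁ k = u₂ k - r₂ k := by rw [hu₂ k]; abel
      rw [h']; exact norm_sub_le _ _
    have h2 : ‖y₁ k‖^2 ≤ (‖u₂ k‖ + ‖r₂ k‖)^2 := by
      have := pow_le_pow_left₀ (norm_nonneg (y₁ k)) h 2
      simpa using this
    have h3 : (‖u₂ k‖ + ‖r₂ k‖)^2 ≤ 2*‖u₂ k‖^2 + 2*‖r₂ k‖^2 := by
      nlinarith [sq_nonneg (‖u₂ k‖ - ‖r₂ k‖)]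
    show ‖y₁ k‖^2 ≤ 2*‖u₂ k‖^2 + 2*‖r₂ k‖^2
    linarith
  exact ⟨hY1, hY2⟩
end
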